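/- Let $k$ be a field, $d \ge 1$, and $a_0, \dots, a_{d-1}$ pairwise distinct elements of $k$. Let $I \subseteq k[x_1,\dots,x_n]$ be a monomial ideal of colength $d$ with minimal monomial generators $x^{M_1},\dots,x^{M_r}$, and let $J_a$ be the ideal generated by the polynomials $f_i = \prod_{j=1}^n (x_j - a_0)(x_j - a_1)\cdots(x_j - a_{M_{ij}-1})$ for $i = 1,\dots,r$. Then the $d$ points $(a_{L_1},\dots,a_{L_n}) \in k^n$, as $x^L$ ranges over the $d$ monomials not in $I$, are pairwise distinct and all lie in the zero set of $J_a$. -/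

import Mathlib

/-!
The exponents of the monomials outside `I = (x^{M_1}, …, x^{M_r})` form the complement of the
upper closure of `{M_i}`, and these monomials are a basis of the quotient, so there are `d` of
them. This complement is a finite lower set: with `L` it contains `t • e_j` for every `t ≤ L_j`,
whence `L_j < d`, and the points `a_L` are distinct because `a` is injective on `{0, …, d - 1}`.
If `L` is not above `M_i`, then `L_j < M_{ij}` for some `j`, and the factor `x_j - a_{L_j}` of
`f_i` vanishes at `a_L`.
-/

open MvPolynomial

namespace MvPolynomial

variable {σ R : Type*}

lemma isCompl_restrictSupport_compl [CommSemiring R] (s : Set (σ →₀ ℕ)) :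
    IsCompl (restrictSupport R s) (restrictSupport R sᶜ) := by
  have h : IsCompl (Finsupp.supported R R s) (Finsupp.supported R R sᶜ) :=
    ⟨Finsupp.disjoint_supported_supported disjoint_compl_right, by
      rw [codisjoint_iff, ← Finsupp.supported_union, Set.union_compl_self, Finsupp.supported_univ]⟩
  simp only [restrictSupport, AddMonoidAlgebra.supported_eq_map]
  exact (Submodule.orderIsoMapComap _).isCompl h

lemma restrictScalars_span_monomial_image [CommSemiring R] (S : Set (σ →₀ ℕ)) :
    (Ideal.span ((fun s => monomial s (1 : R)) '' S)).restrictScalars R =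
      restrictSupport R (upperClosure S) := by
  ext f
  simp [mem_ideal_span_monomial_image, mem_restrictSupport_iff, Set.subset_def]

lemma monomial_one_mem_span_monomial_image_iff [CommSemiring R] [Nontrivial R]
    {S : Set (σ →₀ ℕ)} {L : σ →₀ ℕ} :
    monomial L (1 : R) ∈ Ideal.span ((fun s => monomial s (1 : R)) '' S) ↔ L ∈ upperClosure S := by
  rw [← Submodule.restrictScalars_mem R, restrictScalars_span_monomial_image]
  simp

noncomputable def basisQuotientSpanMonomialImage [CommRing R] (S : Set (σ →₀ ℕ)) :
    Module.Basis ↥(↑(upperClosure S) : Set (σ →₀ ℕ))ᶜ R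
      (MvPolynomial σ R ⧸ Ideal.span ((fun s => monomial s (1 : R)) '' S)) :=
  (basisRestrictSupport R _).map <|
    ((Submodule.Quotient.restrictScalarsEquiv R _).symm ≪≫ₗ
      Submodule.quotEquivOfEq _ _ (restrictScalars_span_monomial_image S) ≪≫ₗ
      Submodule.quotientEquivOfIsCompl _ _ (isCompl_restrictSupport_compl _)).symm

lemma finrank_quotient_span_monomial_image {k : Type*} [Field k] (S : Set (σ →₀ ℕ)) :
    Module.finrank k (MvPolynomial σ k ⧸ Ideal.span ((fun s => monomial s (1 : k)) '' S)) =
      (↑(upperClosure S) : Set (σ →₀ ℕ))ᶜ.ncard := by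
  rw [Module.finrank_eq_nat_card_basis (basisQuotientSpanMonomialImage S), Nat.card_coe_set_eq]

lemma eval_prod_prod_X_sub_C_eq_zero [CommRing R] [Fintype σ] (a : ℕ → R) {m L : σ →₀ ℕ}
    (h : ¬ m ≤ L) : eval (fun j => a (L j)) (∏ j, ∏ t ∈ Finset.range (m j), (X j - C (a t))) = 0 := by
  obtain ⟨j, hj⟩ := not_forall.1 (mt Finsupp.le_def.2 h)
  simp only [map_prod]
  exact Finset.prod_eq_zero (Finset.mem_univ j) <|
    Finset.prod_eq_zero (Finset.mem_range.2 (not_le.1 hj)) (by simp)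

end MvPolynomial

lemma Finsupp.lt_ncard_of_mem_isLowerSet {σ : Type*} {s : Set (σ →₀ ℕ)} (hs : IsLowerSet s)
    (hfin : s.Finite) {L : σ →₀ ℕ} (hL : L ∈ s) (j : σ) : L j < s.ncard := by
  have h := Set.ncard_le_ncard_of_injOn (s := ↑(Finset.range (L j + 1))) (Finsupp.single j)
    (fun t ht => hs (Finsupp.single_le_iff.2 (Nat.lt_succ_iff.1 (Finset.mem_range.1 ht))) hL)
    (Finsupp.single_injective j).injOn hfin
  rwa [Set.ncard_coe_finset, Finset.card_range, Nat.succ_le_iff] at h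

theorem stmt_7_general (k : Type*) [Field k] (n d r : ℕ) (hd : 1 ≤ d)
    (a : ℕ → k) (ha : ∀ i < d, ∀ j < d, a i = a j → i = j)
    (M : Fin r → (Fin n →₀ ℕ))
    (I : Ideal (MvPolynomial (Fin n) k))
    (hgen : I = Ideal.span (Set.range fun i => (monomial (M i) (1 : k) : MvPolynomial (Fin n) k)))
    (hcolen : Module.finrank k (MvPolynomial (Fin n) k ⧸ I) = d)
    (J : Ideal (MvPolynomial (Fin n) k))
    (hJ : J = Ideal.span (Set.range fun i =>
      (∏ j : Fin n, ∏ m ∈ Finset.range (M i j), (X j - C (a m)) : MvPolynomial (Fin n) k))) :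
    Set.InjOn (fun L : Fin n →₀ ℕ => fun j => a (L j))
      {L : Fin n →₀ ℕ | (monomial L (1 : k) : MvPolynomial (Fin n) k) ∉ I} ∧
    Set.ncard {L : Fin n →₀ ℕ | (monomial L (1 : k) : MvPolynomial (Fin n) k) ∉ I} = d ∧
    ∀ L ∈ {L : Fin n →₀ ℕ | (monomial L (1 : k) : MvPolynomial (Fin n) k) ∉ I},
      ∀ f ∈ J, MvPolynomial.eval (fun j => a (L j)) f = 0 := by
  have hI : I = Ideal.span ((fun s => monomial s (1 : k)) '' Set.range M) := by
    rw [hgen, ← Set.range_comp]; rfl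
  have hstd : {L : Fin n →₀ ℕ | (monomial L (1 : k) : MvPolynomial (Fin n) k) ∉ I} =
      (upperClosure (Set.range M) : Set (Fin n →₀ ℕ))ᶜ := by
    ext L
    simp [hI, monomial_one_mem_span_monomial_image_iff]
  have hcard : (upperClosure (Set.range M) : Set (Fin n →₀ ℕ))ᶜ.ncard = d := by
    rw [← hcolen, hI, finrank_quotient_span_monomial_image]
  have hlt : ∀ L ∈ (upperClosure (Set.range M) : Set (Fin n →₀ ℕ))ᶜ, ∀ j, L j < d :=
    fun L hL j => hcard ▸ Finsupp.lt_ncard_of_mem_isLowerSet (upperClosure _).upper.compl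
      (Set.finite_of_ncard_pos (by omega)) hL j
  rw [hstd, hJ]
  refine ⟨fun L hL L' hL' h => ?_, hcard, fun L hL f hf => ?_⟩
  · ext j
    exact ha _ (hlt L hL j) _ (hlt L' hL' j) (congrFun h j)
  · refine (Ideal.span_le (I := RingHom.ker (eval fun j => a (L j)))).2 ?_ hf
    rintro _ ⟨i, rfl⟩
    exact eval_prod_prod_X_sub_C_eq_zero a fun h => hL (mem_upperClosure.2 ⟨M i, ⟨i, rfl⟩, h⟩)

theorem stmt_7 (k : Type*) [Field k] (n d r : ℕ) (hd : 1 ≤ d)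
    (a : ℕ → k) (ha : ∀ i < d, ∀ j < d, a i = a j → i = j)
    (M : Fin r → (Fin n →₀ ℕ))
    (I : Ideal (MvPolynomial (Fin n) k))
    (hgen : I = Ideal.span (Set.range fun i => (monomial (M i) (1 : k) : MvPolynomial (Fin n) k)))
    (hmin : ∀ i j : Fin r, i ≠ j → ¬ M i ≤ M j)
    (hcolen : Module.finrank k (MvPolynomial (Fin n) k ⧸ I) = d)
    (J : Ideal (MvPolynomial (Fin n) k))
    (hJ : J = Ideal.span (Set.range fun i =>
      (∏ j : Fin n, ∏ m ∈ Finset.range (M i j), (X j - C (a m)) : MvPolynomial (Fin n) k))) :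
    Set.InjOn (fun L : Fin n →₀ ℕ => fun j => a (L j))
      {L : Fin n →₀ ℕ | (monomial L (1 : k) : MvPolynomial (Fin n) k) ∉ I} ∧
    Set.ncard {L : Fin n →₀ ℕ | (monomial L (1 : k) : MvPolynomial (Fin n) k) ∉ I} = d ∧
    ∀ L ∈ {L : Fin n →₀ ℕ | (monomial L (1 : k) : MvPolynomial (Fin n) k) ∉ I},
      ∀ f ∈ J, MvPolynomial.eval (fun j => a (L j)) f = 0 :=
  stmt_7_general k n d r hd a ha M I hgen hcolen J hJ
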